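/- arXiv:2212.00362 — 4 statements merged into one kernel-verified Lean document; each statement's English description precedes it below -/
import Mathlib

section
/- Suppose (θ_u, E_u) attains the infimum of the unconditional objective, i.e. D(q̄, p θ_u E_u) = ⨅_{θ ∈ Θ, E ∈ ℰ} D(q̄, p θ E), and (θ_c, φ_c) attains the infimum of the conditional objective, i.e. ∑_c w c * D(q c, p θ_c (φ_c c)) = ⨅_{θ ∈ Θ, φ : C → ℰ} ∑_c w c * D(q c, p θ (φ c)). If ⨅_{θ ∈ Θ} ∑_c w c * (⨅_{E ∈ ℰ} D(q c, p θ E)) < ⨅_{θ ∈ Θ, E ∈ ℰ} D(q̄, p θ E) and D is jointly convex under finite mixtures, then D(q̄, ∑_c (w c) • p θ_c (φ_c c)) < D(q̄, p θ_u E_u). (Lemma 1: the marginal induced by the optimal conditional model is strictly closer to the data distribution than the optimal unconditional model.) -/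
open MeasureTheory ENNReal

/-- A divergence `D` on measures is jointly convex under finite mixtures if for every nonempty
finite index type `I`, weights `α` summing to one, and families of probability measures
`μ ν : I → Measure X`, we have `D (∑ i, α i • μ i) (∑ i, α i • ν i) ≤ ∑ i, α i * D (μ i) (ν i)`. -/
def JointlyConvexUnderMixtures {X : Type} [MeasurableSpace X]
    (D : Measure X → Measure X → ℝ≥0∞) : Prop :=
  ∀ (I : Type) (_ : Fintype I) (_ : Nonempty I) (α : I → ℝ≥0∞) (μ ν : I → Measure X),
    (∑ i, α i = 1) → (∀ i, IsProbabilityMeasure (μ i)) → (∀ i, IsProbabilityMeasure (ν i)) →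
    D (∑ i, α i • μ i) (∑ i, α i • ν i) ≤ ∑ i, α i * D (μ i) (ν i)

/-- Auxiliary: the infimum over joint choice functions is at most the sum of pointwise infima. -/
lemma iInf_sum_le_sum_iInf {C ℰ : Type} [Fintype C] [Nonempty ℰ]
    (w : C → ℝ≥0∞) (hw : ∑ c, w c = 1) (g : C → ℰ → ℝ≥0∞) :
    (⨅ φ : C → ℰ, ∑ c, w c * g c (φ c)) ≤ ∑ c, w c * ⨅ E, g c E := by
  refine ENNReal.le_of_forall_pos_le_add fun ε hε hfin => ?_
  -- choose for each c an E near the infimum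
  have hchoice : ∀ c : C, ∃ E : ℰ, g c E ≤ (⨅ E, g c E) + ε := by
    intro c
    by_cases h : (⨅ E, g c E) = ⊤
    · exact ⟨Classical.arbitrary ℰ, by simp [h]⟩
    · have : (⨅ E, g c E) < (⨅ E, g c E) + ε := by
        exact ENNReal.lt_add_right h (by exact_mod_cast hε.ne')
      obtain ⟨E, hE⟩ := iInf_lt_iff.mp this
      exact ⟨E, hE.le⟩
  choose φ hφ using hchoice
  calc (⨅ φ : C → ℰ, ∑ c, w c * g c (φ c)) ≤ ∑ c, w c * g c (φ c) := iInf_le _ φ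
    _ ≤ ∑ c, w c * ((⨅ E, g c E) + ε) := by
        exact Finset.sum_le_sum fun c _ => mul_le_mul_right (hφ c) _
    _ = (∑ c, w c * ⨅ E, g c E) + (∑ c, w c) * ε := by
        simp [mul_add, Finset.sum_add_distrib, Finset.sum_mul]
    _ = (∑ c, w c * ⨅ E, g c E) + ε := by rw [hw, one_mul]

/-- Lemma 1: if the optimal decoupled conditional objective is strictly smaller than the optimal
unconditional objective and `D` is jointly convex under finite mixtures, then the marginal of
the optimal conditional model is strictly closer to the data distribution than the optimal
unconditional model. -/
theorem conditional_better_of_gap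
    {X : Type} [MeasurableSpace X] {C : Type} [Fintype C] [Nonempty C]
    (w : C → ℝ≥0∞) (hw : ∑ c, w c = 1)
    (q : C → Measure X) (hq : ∀ c, IsProbabilityMeasure (q c))
    {Θ ℰ : Type} [Nonempty Θ] [Nonempty ℰ]
    (p : Θ → ℰ → Measure X) (hp : ∀ θ E, IsProbabilityMeasure (p θ E))
    (D : Measure X → Measure X → ℝ≥0∞)
    (hD : JointlyConvexUnderMixtures D)
    (θu : Θ) (Eu : ℰ)
    (hu : D (∑ c, w c • q c) (p θu Eu) = ⨅ θ, ⨅ E, D (∑ c, w c • q c) (p θ E))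
    (θc : Θ) (φc : C → ℰ)
    (hc : ∑ c, w c * D (q c) (p θc (φc c))
        = ⨅ θ, ⨅ φ : C → ℰ, ∑ c, w c * D (q c) (p θ (φ c)))
    (hgap : (⨅ θ, ∑ c, w c * ⨅ E, D (q c) (p θ E))
        < ⨅ θ, ⨅ E, D (∑ c, w c • q c) (p θ E)) :
    D (∑ c, w c • q c) (∑ c, w c • p θc (φc c)) < D (∑ c, w c • q c) (p θu Eu) := by
  have hconv : D (∑ c, w c • q c) (∑ c, w c • p θc (φc c))
      ≤ ∑ c, w c * D (q c) (p θc (φc c)) :=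
    hD C inferInstance inferInstance w q (fun c => p θc (φc c)) hw hq (fun c => hp _ _)
  have hle : (⨅ θ, ⨅ φ : C → ℰ, ∑ c, w c * D (q c) (p θ (φ c)))
      ≤ ⨅ θ, ∑ c, w c * ⨅ E, D (q c) (p θ E) :=
    iInf_mono fun θ => iInf_sum_le_sum_iInf w hw _
  calc D (∑ c, w c • q c) (∑ c, w c • p θc (φc c))
      ≤ ∑ c, w c * D (q c) (p θc (φc c)) := hconv
    _ = ⨅ θ, ⨅ φ : C → ℰ, ∑ c, w c * D (q c) (p θ (φ c)) := hc
    _ ≤ ⨅ θ, ∑ c, w c * ⨅ E, D (q c) (p θ E) := hle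
    _ < ⨅ θ, ⨅ E, D (∑ c, w c • q c) (p θ E) := hgap
    _ = D (∑ c, w c • q c) (p θu Eu) := hu.symm
end

section
/- Suppose that for every θ ∈ Θ and every condition c ∈ C, approximating the conditional distribution is simpler than approximating the marginal by tuning only the embedding, i.e. ⨅_{E ∈ ℰ} D(q c, p θ E) < ⨅_{E ∈ ℰ} D(q̄, p θ E). Suppose moreover that D is jointly convex under finite mixtures, that (θ_u, E_u) attains the infimum of the unconditional objective D(q̄, p θ E) over (θ, E), and that (θ_c, φ_c) attains the infimum of the conditional objective ∑_c w c * D(q c, p θ (φ c)) over θ ∈ Θ and φ : C → ℰ. Then D(q̄, ∑_c (w c) • p θ_c (φ_c c)) < D(q̄, p θ_u E_u). (Proposition 1: a sufficient condition for the optimal conditional model to strictly outperform the optimal unconditional model.) -/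
open MeasureTheory ENNReal

/-- Auxiliary: a weighted average (weights summing to 1) of values each strictly below `b`
is strictly below `b`. -/
lemma sum_mul_lt_of_forall_lt {C : Type} [Fintype C]
    (w a : C → ℝ≥0∞) (hw : ∑ c, w c = 1) (b : ℝ≥0∞) (h : ∀ c, a c < b) :
    ∑ c, w c * a c < b := by
  classical
  have hwle : ∀ c, w c ≤ 1 := by
    intro c
    rw [← hw]
    exact Finset.single_le_sum (fun i _ => zero_le) (Finset.mem_univ c)
  have hterm : ∀ c, w c * a c < ⊤ := fun c =>
    ENNReal.mul_lt_top (lt_of_le_of_lt (hwle c) one_lt_top) (lt_of_lt_of_le (h c) le_top)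
  rcases eq_or_ne b ⊤ with hb | hb
  · rw [hb]
    exact ENNReal.sum_lt_top.2 fun c _ => hterm c
  · obtain ⟨c₀, _, hc₀⟩ : ∃ c ∈ Finset.univ, w c ≠ 0 :=
      Finset.exists_ne_zero_of_sum_ne_zero (hw ▸ one_ne_zero)
    have hwne : w c₀ ≠ ⊤ := ne_top_of_le_ne_top one_ne_top (hwle c₀)
    calc ∑ c, w c * a c
        = w c₀ * a c₀ + ∑ c ∈ Finset.univ.erase c₀, w c * a c :=
          (Finset.add_sum_erase _ _ (Finset.mem_univ c₀)).symm
      _ < w c₀ * b + ∑ c ∈ Finset.univ.erase c₀, w c * b := by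
          refine ENNReal.add_lt_add_of_lt_of_le ?_ ?_ ?_
          · exact (ENNReal.sum_lt_top.2 fun c _ => hterm c).ne
          · exact (ENNReal.mul_lt_mul_iff_right hc₀ hwne).2 (h c₀)
          · exact Finset.sum_le_sum fun c _ => mul_le_mul_right (h c).le _
      _ = ∑ c, w c * b := Finset.add_sum_erase _ (fun c => w c * b) (Finset.mem_univ c₀)
      _ = (∑ c, w c) * b := by rw [Finset.sum_mul]
      _ = b := by rw [hw, one_mul]

/-- Proposition 1: if for every backbone `θ` and condition `c`, approximating `q(·|c)` by tuning
only the embedding is strictly simpler than approximating the marginal `q̄`, and `D` is jointly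
convex under finite mixtures, then the optimal conditional model strictly outperforms the
optimal unconditional model. -/
theorem conditional_better_of_pointwise_simpler
    {X : Type} [MeasurableSpace X] {C : Type} [Fintype C] [Nonempty C]
    (w : C → ℝ≥0∞) (hw : ∑ c, w c = 1)
    (q : C → Measure X) (hq : ∀ c, IsProbabilityMeasure (q c))
    {Θ ℰ : Type} [Nonempty Θ] [Nonempty ℰ]
    (p : Θ → ℰ → Measure X) (hp : ∀ θ E, IsProbabilityMeasure (p θ E))
    (D : Measure X → Measure X → ℝ≥0∞)
    (hD : JointlyConvexUnderMixtures D)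
    (hsimpler : ∀ θ c, (⨅ E, D (q c) (p θ E)) < ⨅ E, D (∑ c', w c' • q c') (p θ E))
    (θu : Θ) (Eu : ℰ)
    (hu : D (∑ c, w c • q c) (p θu Eu) = ⨅ θ, ⨅ E, D (∑ c, w c • q c) (p θ E))
    (θc : Θ) (φc : C → ℰ)
    (hc : ∑ c, w c * D (q c) (p θc (φc c))
        = ⨅ θ, ⨅ φ : C → ℰ, ∑ c, w c * D (q c) (p θ (φ c))) :
    D (∑ c, w c • q c) (∑ c, w c • p θc (φc c)) < D (∑ c, w c • q c) (p θu Eu) := by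
  set b := D (∑ c, w c • q c) (p θu Eu) with hb
  -- per-condition: infimum over embeddings is strictly below `b`
  have h1 : ∀ c, (⨅ E, D (q c) (p θu E)) < b :=
    fun c => lt_of_lt_of_le (hsimpler θu c) (iInf_le _ Eu)
  choose φ hφ using fun c => iInf_lt_iff.mp (h1 c)
  -- the conditional objective at (θu, φ) is strictly below `b`
  have hkey : ∑ c, w c * D (q c) (p θu (φ c)) < b :=
    sum_mul_lt_of_forall_lt w _ hw b hφ
  -- convexity bound
  have hconv : D (∑ c, w c • q c) (∑ c, w c • p θc (φc c))
      ≤ ∑ c, w c * D (q c) (p θc (φc c)) :=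
    hD C inferInstance inferInstance w q (fun c => p θc (φc c)) hw hq (fun c => hp _ _)
  -- the conditional optimum is at most the value at (θu, φ)
  have hle : ∑ c, w c * D (q c) (p θc (φc c)) ≤ ∑ c, w c * D (q c) (p θu (φ c)) := by
    rw [hc]
    exact le_trans (iInf_le _ θu) (iInf_le _ φ)
  exact lt_of_le_of_lt (le_trans hconv hle) hkey
end

section
/- Let D be the Kullback–Leibler divergence. Suppose that for every θ ∈ Θ and every condition c ∈ C, ⨅_{E ∈ ℰ} KL(q c ‖ p θ E) < ⨅_{E ∈ ℰ} KL(q̄ ‖ p θ E); suppose (θ_u, E_u) attains the infimum of KL(q̄ ‖ p θ E) over (θ, E); and suppose (θ_c, φ_c) attains the infimum of ∑_c w c * KL(q c ‖ p θ (φ c)) over θ ∈ Θ and φ : C → ℰ. Then KL(q̄ ‖ ∑_c (w c) • p θ_c (φ_c c)) < KL(q̄ ‖ p θ_u E_u). (Proposition 1 specialized to the KL divergence, whose joint convexity holds unconditionally.) -/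
open MeasureTheory ENNReal

/-- The Kullback–Leibler divergence `KL(μ ‖ ν)`, valued in `ℝ≥0∞` (as in Mathlib's `klDiv`):
it equals `∫ x, llr μ ν x ∂μ` when `μ ≪ ν` and the log-likelihood ratio is integrable,
and `∞` otherwise. -/
noncomputable def klDiv {X : Type} [MeasurableSpace X] (μ ν : Measure X) : ℝ≥0∞ :=
  open scoped Classical in
  if μ ≪ ν ∧ Integrable (llr μ ν) μ then ENNReal.ofReal (∫ x, llr μ ν x ∂μ) else ∞


/-- extended KL integrand `a log(a/b) - a + b`. -/
noncomputable def Kfun (a b : ℝ≥0∞) : ℝ≥0∞ :=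
  open scoped Classical in
  if a = 0 then b
  else if a = ∞ ∨ b = ∞ ∨ b = 0 then ∞
  else ENNReal.ofReal (a.toReal * Real.log (a.toReal / b.toReal) - a.toReal + b.toReal)

lemma Kfun_zero_left (b : ℝ≥0∞) : Kfun 0 b = b := by simp [Kfun]

lemma Kfun_ne_top_cases {a b : ℝ≥0∞} (h : Kfun a b ≠ ∞) :
    (a = 0 ∧ b ≠ ∞) ∨ (a ≠ 0 ∧ a ≠ ∞ ∧ b ≠ 0 ∧ b ≠ ∞) := by
  unfold Kfun at h
  split_ifs at h with h1 h2
  · exact Or.inl ⟨h1, h⟩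
  · exact absurd rfl h
  · push_neg at h2; exact Or.inr ⟨h1, h2.1, h2.2.2, h2.2.1⟩

lemma Kfun_of_pos {a b : ℝ≥0∞} (ha0 : a ≠ 0) (ha : a ≠ ∞) (hb0 : b ≠ 0) (hb : b ≠ ∞) :
    Kfun a b = ENNReal.ofReal (a.toReal * Real.log (a.toReal / b.toReal) - a.toReal + b.toReal) := by
  unfold Kfun
  rw [if_neg ha0, if_neg (by push_neg; exact ⟨ha, hb, hb0⟩)]

lemma kl_real_nonneg {x y : ℝ} (hx : 0 ≤ x) (hy : 0 < y) :
    0 ≤ x * Real.log (x / y) - x + y := by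
  rcases eq_or_lt_of_le hx with h | h
  · simp [← h]; positivity
  · have h1 : Real.log (y / x) ≤ y / x - 1 := Real.log_le_sub_one_of_pos (by positivity)
    have h2 : Real.log (x / y) = - Real.log (y / x) := by
      rw [← Real.log_inv]; congr 1; field_simp
    have h3 : x * Real.log (y / x) ≤ x * (y / x - 1) := mul_le_mul_of_nonneg_left h1 h.le
    have h4 : x * (y / x - 1) = y - x := by field_simp
    nlinarith

lemma log_sum_ineq {a1 a2 b1 b2 : ℝ} (ha1 : 0 ≤ a1) (ha2 : 0 ≤ a2) (hb1 : 0 < b1) (hb2 : 0 < b2) :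
    (a1 + a2) * Real.log ((a1 + a2) / (b1 + b2))
      ≤ a1 * Real.log (a1 / b1) + a2 * Real.log (a2 / b2) := by
  have hs : 0 < b1 + b2 := by positivity
  have key := Real.convexOn_mul_log.2 (Set.mem_Ici.2 (div_nonneg ha1 hb1.le))
    (Set.mem_Ici.2 (div_nonneg ha2 hb2.le))
    (show 0 ≤ b1 / (b1 + b2) by positivity) (show 0 ≤ b2 / (b1 + b2) by positivity)
    (by field_simp)
  have harg : (b1 / (b1 + b2)) • (a1 / b1) + (b2 / (b1 + b2)) • (a2 / b2)
      = (a1 + a2) / (b1 + b2) := by simp only [smul_eq_mul]; field_simp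
  rw [harg] at key
  have := mul_le_mul_of_nonneg_left key hs.le
  calc (a1 + a2) * Real.log ((a1 + a2) / (b1 + b2))
      = (b1 + b2) * ((a1 + a2) / (b1 + b2) * Real.log ((a1 + a2) / (b1 + b2))) := by
        field_simp
    _ ≤ (b1 + b2) * ((b1 / (b1 + b2)) • (a1 / b1 * Real.log (a1 / b1))
          + (b2 / (b1 + b2)) • (a2 / b2 * Real.log (a2 / b2))) := this
    _ = a1 * Real.log (a1 / b1) + a2 * Real.log (a2 / b2) := by simp only [smul_eq_mul]; field_simp

lemma Kfun_smul {w : ℝ≥0∞} (hw : w ≠ ∞) (a b : ℝ≥0∞) :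
    Kfun (w * a) (w * b) = w * Kfun a b := by
  rcases eq_or_ne w 0 with rfl | hw0
  · simp [Kfun]
  have hmz : ∀ x : ℝ≥0∞, (w * x = 0) ↔ x = 0 := fun x => by simp [hw0]
  have hmt : ∀ x : ℝ≥0∞, (w * x = ∞) ↔ x = ∞ := fun x => by
    simp [ENNReal.mul_eq_top, hw, hw0]
  unfold Kfun
  simp only [hmz, hmt]
  split_ifs with h1 h2
  · rfl
  · exact (ENNReal.mul_top hw0).symm
  · push_neg at h2
    obtain ⟨hat, hbt, hb0⟩ := h2
    have hW : 0 < w.toReal := ENNReal.toReal_pos hw0 hw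
    rw [ENNReal.toReal_mul, ENNReal.toReal_mul, mul_div_mul_left _ _ hW.ne']
    rw [show w.toReal * a.toReal * Real.log (a.toReal / b.toReal) - w.toReal * a.toReal
        + w.toReal * b.toReal
        = w.toReal * (a.toReal * Real.log (a.toReal / b.toReal) - a.toReal + b.toReal) by ring]
    rw [ENNReal.ofReal_mul ENNReal.toReal_nonneg, ENNReal.ofReal_toReal hw]

lemma Kfun_add_le (a1 a2 b1 b2 : ℝ≥0∞) :
    Kfun (a1 + a2) (b1 + b2) ≤ Kfun a1 b1 + Kfun a2 b2 := by
  rcases eq_or_ne (Kfun a1 b1) ∞ with h1 | h1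
  · simp [h1]
  rcases eq_or_ne (Kfun a2 b2) ∞ with h2 | h2
  · simp [h2]
  rcases Kfun_ne_top_cases h1 with ⟨rfl, hb1⟩ | ⟨ha10, ha1t, hb10, hb1t⟩ <;>
    rcases Kfun_ne_top_cases h2 with ⟨rfl, hb2⟩ | ⟨ha20, ha2t, hb20, hb2t⟩
  · simp [Kfun_zero_left]
  · -- a1 = 0
    rw [zero_add, Kfun_zero_left]
    have hb12t : b1 + b2 ≠ ∞ := ENNReal.add_ne_top.2 ⟨hb1, hb2t⟩
    have hb120 : b1 + b2 ≠ 0 := by simp [hb20]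
    rw [Kfun_of_pos ha20 ha2t hb120 hb12t, Kfun_of_pos ha20 ha2t hb20 hb2t]
    have hA2 : 0 < a2.toReal := ENNReal.toReal_pos ha20 ha2t
    have hB2 : 0 < b2.toReal := ENNReal.toReal_pos hb20 hb2t
    conv_rhs => rw [← ENNReal.ofReal_toReal hb1]
    rw [← ENNReal.ofReal_add ENNReal.toReal_nonneg (kl_real_nonneg hA2.le hB2)]
    apply ENNReal.ofReal_le_ofReal
    rw [ENNReal.toReal_add hb1 hb2t]
    have hdiv : a2.toReal / (b1.toReal + b2.toReal) ≤ a2.toReal / b2.toReal := by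
      apply div_le_div_of_nonneg_left hA2.le hB2
      simp [ENNReal.toReal_nonneg]
    have hlog : Real.log (a2.toReal / (b1.toReal + b2.toReal))
        ≤ Real.log (a2.toReal / b2.toReal) := by
      apply Real.log_le_log (by positivity) hdiv
    nlinarith [mul_le_mul_of_nonneg_left hlog hA2.le, ENNReal.toReal_nonneg (a := b1)]
  · -- a2 = 0
    rw [add_zero, Kfun_zero_left]
    have hb12t : b1 + b2 ≠ ∞ := ENNReal.add_ne_top.2 ⟨hb1t, hb2⟩
    have hb120 : b1 + b2 ≠ 0 := by simp [hb10]
    rw [Kfun_of_pos ha10 ha1t hb120 hb12t, Kfun_of_pos ha10 ha1t hb10 hb1t]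
    have hA1 : 0 < a1.toReal := ENNReal.toReal_pos ha10 ha1t
    have hB1 : 0 < b1.toReal := ENNReal.toReal_pos hb10 hb1t
    conv_rhs => rw [← ENNReal.ofReal_toReal hb2]
    rw [← ENNReal.ofReal_add (kl_real_nonneg hA1.le hB1) ENNReal.toReal_nonneg]
    apply ENNReal.ofReal_le_ofReal
    rw [ENNReal.toReal_add hb1t hb2]
    have hdiv : a1.toReal / (b1.toReal + b2.toReal) ≤ a1.toReal / b1.toReal := by
      apply div_le_div_of_nonneg_left hA1.le hB1
      simp [ENNReal.toReal_nonneg]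
    have hlog : Real.log (a1.toReal / (b1.toReal + b2.toReal))
        ≤ Real.log (a1.toReal / b1.toReal) := by
      apply Real.log_le_log (by positivity) hdiv
    nlinarith [mul_le_mul_of_nonneg_left hlog hA1.le, ENNReal.toReal_nonneg (a := b2)]
  · -- both positive
    have ha12t : a1 + a2 ≠ ∞ := ENNReal.add_ne_top.2 ⟨ha1t, ha2t⟩
    have ha120 : a1 + a2 ≠ 0 := by simp [ha10]
    have hb12t : b1 + b2 ≠ ∞ := ENNReal.add_ne_top.2 ⟨hb1t, hb2t⟩
    have hb120 : b1 + b2 ≠ 0 := by simp [hb10]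
    have hA1 : 0 < a1.toReal := ENNReal.toReal_pos ha10 ha1t
    have hA2 : 0 < a2.toReal := ENNReal.toReal_pos ha20 ha2t
    have hB1 : 0 < b1.toReal := ENNReal.toReal_pos hb10 hb1t
    have hB2 : 0 < b2.toReal := ENNReal.toReal_pos hb20 hb2t
    rw [Kfun_of_pos ha120 ha12t hb120 hb12t, Kfun_of_pos ha10 ha1t hb10 hb1t,
      Kfun_of_pos ha20 ha2t hb20 hb2t,
      ← ENNReal.ofReal_add (kl_real_nonneg hA1.le hB1) (kl_real_nonneg hA2.le hB2)]
    apply ENNReal.ofReal_le_ofReal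
    rw [ENNReal.toReal_add ha1t ha2t, ENNReal.toReal_add hb1t hb2t]
    have := log_sum_ineq hA1.le hA2.le hB1 hB2
    linarith

lemma Kfun_finset_sum {ι : Type*} (s : Finset ι) (a b : ι → ℝ≥0∞) :
    Kfun (∑ i ∈ s, a i) (∑ i ∈ s, b i) ≤ ∑ i ∈ s, Kfun (a i) (b i) := by
  classical
  induction s using Finset.induction with
  | empty => simp [Kfun_zero_left]
  | insert _ _ hi ih =>
    rw [Finset.sum_insert hi, Finset.sum_insert hi, Finset.sum_insert hi]
    exact (Kfun_add_le _ _ _ _).trans (add_le_add_right ih _)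

section
variable {X : Type} [MeasurableSpace X]

lemma measurable_Kfun {f g : X → ℝ≥0∞} (hf : Measurable f) (hg : Measurable g) :
    Measurable (fun x => Kfun (f x) (g x)) := by
  unfold Kfun
  classical
  refine Measurable.ite (hf (measurableSet_singleton 0)) hg ?_
  refine Measurable.ite ?_ measurable_const ?_
  · exact ((hf (measurableSet_singleton ∞)).union
      ((hg (measurableSet_singleton ∞)).union (hg (measurableSet_singleton 0))))
  · apply ENNReal.measurable_ofReal.comp
    exact ((hf.ennreal_toReal.mul
      (Real.measurable_log.comp (hf.ennreal_toReal.div hg.ennreal_toReal))).sub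
        hf.ennreal_toReal).add hg.ennreal_toReal
end


section
variable {X : Type} [MeasurableSpace X]

lemma klDiv_eq_lintegral_Kfun (μ ν : Measure X) [IsProbabilityMeasure μ]
    [IsProbabilityMeasure ν] (hμν : μ ≪ ν) :
    klDiv μ ν = ∫⁻ x, Kfun (μ.rnDeriv ν x) 1 ∂ν := by
  classical
  set r : X → ℝ := fun x => (μ.rnDeriv ν x).toReal with hrdef
  have hrmeas : Measurable r := (Measure.measurable_rnDeriv μ ν).ennreal_toReal
  set ψ : X → ℝ := fun x => r x * Real.log (r x) - r x + 1 with hψdef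
  have hψmeas : Measurable ψ :=
    ((hrmeas.mul (Real.measurable_log.comp hrmeas)).sub hrmeas).add measurable_const
  have hψ0 : ∀ x, 0 ≤ ψ x := by
    intro x
    have := kl_real_nonneg (x := r x) (y := 1) ENNReal.toReal_nonneg one_pos
    simpa using this
  have hae : ∀ᵐ x ∂ν, Kfun (μ.rnDeriv ν x) 1 = ENNReal.ofReal (ψ x) := by
    filter_upwards [μ.rnDeriv_lt_top ν] with x hx
    rcases eq_or_ne (μ.rnDeriv ν x) 0 with h0 | h0
    · simp [Kfun_zero_left, hψdef, hrdef, h0]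
    · rw [Kfun_of_pos h0 hx.ne one_ne_zero one_ne_top]
      simp [hψdef, hrdef]
  rw [lintegral_congr_ae hae]
  have hrint : Integrable r ν := Measure.integrable_toReal_rnDeriv
  have hrint1 : ∫ x, r x ∂ν = 1 := by
    rw [hrdef, Measure.integral_toReal_rnDeriv hμν]
    simp
  have hiff : Integrable (llr μ ν) μ ↔ Integrable (fun x => r x * Real.log (r x)) ν := by
    rw [← integrable_rnDeriv_smul_iff hμν]
    refine integrable_congr (ae_of_all _ fun x => ?_)
    simp [llr, smul_eq_mul, hrdef]
  by_cases hint : Integrable (llr μ ν) μ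
  · have h1 : ∫ x, llr μ ν x ∂μ = ∫ x, r x * Real.log (r x) ∂ν := by
      rw [← integral_rnDeriv_smul hμν]
      refine integral_congr_ae (ae_of_all _ fun x => ?_)
      simp [llr, smul_eq_mul, hrdef]
    have hint2 : Integrable (fun x => r x * Real.log (r x)) ν := hiff.mp hint
    have hψint : Integrable ψ ν := by
      have h := (hint2.sub hrint).add (integrable_const (1:ℝ))
      exact h.congr (ae_of_all _ fun x => by simp [hψdef])
    have h2 : ∫ x, ψ x ∂ν = ∫ x, r x * Real.log (r x) ∂ν := by
      have e1 : ∫ x, ψ x ∂ν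
          = ∫ x, (r x * Real.log (r x) - r x) ∂ν + ∫ x, (1:ℝ) ∂ν := by
        exact integral_add (f := fun x => r x * Real.log (r x) - r x)
          (g := fun _ => (1:ℝ)) (hint2.sub hrint) (integrable_const 1)
      rw [e1, integral_sub hint2 hrint, hrint1]
      simp
    rw [klDiv, if_pos ⟨hμν, hint⟩, h1, ← h2,
      ofReal_integral_eq_lintegral_ofReal hψint (ae_of_all _ hψ0)]
  · rw [klDiv, if_neg (by tauto)]
    by_contra hne
    have hlt : ∫⁻ x, ENNReal.ofReal (ψ x) ∂ν < ∞ := lt_top_iff_ne_top.2 fun h => hne (by rw [h])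
    have hψint : Integrable ψ ν := by
      refine ⟨hψmeas.aestronglyMeasurable, ?_⟩
      rw [hasFiniteIntegral_iff_ofReal (ae_of_all _ hψ0)]
      exact hlt
    have hint2 : Integrable (fun x => r x * Real.log (r x)) ν := by
      have h := (hψint.add hrint).sub (integrable_const 1)
      refine h.congr (ae_of_all _ fun x => ?_)
      simp [hψdef]; ring
    exact hint (hiff.mpr hint2)

section
variable {X : Type} [MeasurableSpace X]
lemma lintegral_Kfun_base (μ ν lam : Measure X) [IsFiniteMeasure μ] [IsFiniteMeasure ν]
    [IsFiniteMeasure lam] (hμν : μ ≪ ν) (hνl : ν ≪ lam) :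
    ∫⁻ x, Kfun (μ.rnDeriv lam x) (ν.rnDeriv lam x) ∂lam
      = ∫⁻ x, Kfun (μ.rnDeriv ν x) 1 ∂ν := by
  have h1 : ∀ᵐ x ∂lam, Kfun (μ.rnDeriv lam x) (ν.rnDeriv lam x)
      = ν.rnDeriv lam x * Kfun (μ.rnDeriv ν x) 1 := by
    filter_upwards [Measure.rnDeriv_mul_rnDeriv hμν (κ := lam), ν.rnDeriv_lt_top lam]
      with x hx hlt
    rw [← hx]
    have h := Kfun_smul hlt.ne (μ.rnDeriv ν x) 1
    simp only [mul_one] at h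
    rw [Pi.mul_apply, mul_comm (μ.rnDeriv ν x), h]
  rw [lintegral_congr_ae h1,
    lintegral_rnDeriv_mul hνl
      ((measurable_Kfun (Measure.measurable_rnDeriv μ ν) measurable_const).aemeasurable)]

lemma rnDeriv_finset_sum {ι : Type} [Fintype ι] (μs : ι → Measure X) (ρ : Measure X)
    [IsFiniteMeasure ρ] (h : ∀ i, IsFiniteMeasure (μs i)) (s : Finset ι) :
    (∑ i ∈ s, μs i).rnDeriv ρ =ᵐ[ρ] fun x => ∑ i ∈ s, (μs i).rnDeriv ρ x := by
  classical
  induction s using Finset.induction with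
  | empty =>
    simp only [Finset.sum_empty]
    filter_upwards [Measure.rnDeriv_zero ρ] with x hx
    simp [hx]
  | @insert a s ha ih =>
    haveI := h a
    haveI : IsFiniteMeasure (∑ i ∈ s, μs i) := by
      constructor
      rw [Measure.finset_sum_apply]
      exact ENNReal.sum_lt_top.2 fun i _ => (h i).measure_univ_lt_top
    rw [Finset.sum_insert ha]
    filter_upwards [Measure.rnDeriv_add' (μs a) (∑ i ∈ s, μs i) ρ, ih] with x hx hx2
    rw [hx, Pi.add_apply, hx2, Finset.sum_insert ha]

lemma klDiv_mix_le {C : Type} [Fintype C] (w : C → ℝ≥0∞) (hw : ∑ c, w c = 1)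
    (μ ν : C → Measure X) (hμ : ∀ c, IsProbabilityMeasure (μ c))
    (hν : ∀ c, IsProbabilityMeasure (ν c)) :
    klDiv (∑ c, w c • μ c) (∑ c, w c • ν c) ≤ ∑ c, w c * klDiv (μ c) (ν c) := by
  classical
  have hwt : ∀ c, w c ≠ ∞ := by
    intro c
    have h1 : w c ≤ 1 := hw ▸ Finset.single_le_sum (f := w)
      (fun i _ => zero_le) (Finset.mem_univ c)
    exact (h1.trans_lt ENNReal.one_lt_top).ne
  by_cases hred : ∀ c, w c = 0 ∨ (μ c ≪ ν c ∧ Integrable (llr (μ c) (ν c)) (μ c))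
  swap
  · push_neg at hred
    obtain ⟨c, hc0, hcbad⟩ := hred
    have htop : (∑ c', w c' * klDiv (μ c') (ν c')) = ∞ := by
      refine ENNReal.sum_eq_top.2 ⟨c, Finset.mem_univ c, ?_⟩
      rw [klDiv, if_neg (fun h => hcbad h.1 h.2)]
      exact ENNReal.mul_top hc0
    rw [htop]
    exact le_top
  haveI hμbP : IsProbabilityMeasure (∑ c, w c • μ c) := by
    constructor
    rw [Measure.finset_sum_apply]
    simp only [Measure.smul_apply, smul_eq_mul]
    rw [Finset.sum_congr rfl fun c _ => by rw [(hμ c).measure_univ, mul_one]]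
    exact hw
  haveI hνbP : IsProbabilityMeasure (∑ c, w c • ν c) := by
    constructor
    rw [Measure.finset_sum_apply]
    simp only [Measure.smul_apply, smul_eq_mul]
    rw [Finset.sum_congr rfl fun c _ => by rw [(hν c).measure_univ, mul_one]]
    exact hw
  have happly : ∀ (ρ : C → Measure X) (s : Set X),
      (∑ c, w c • ρ c) s = ∑ c, w c * ρ c s := by
    intro ρ s
    rw [Measure.finset_sum_apply]
    simp [Measure.smul_apply, smul_eq_mul]
  have hac : (∑ c, w c • μ c) ≪ (∑ c, w c • ν c) := by
    refine Measure.AbsolutelyContinuous.mk fun s hs h0 => ?_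
    rw [happly] at h0
    have h0' : ∀ c ∈ Finset.univ, w c * ν c s = 0 := Finset.sum_eq_zero_iff.1 h0
    rw [happly]
    refine Finset.sum_eq_zero fun c _ => ?_
    rcases eq_or_ne (w c) 0 with hc | hc
    · simp [hc]
    · have hνs : ν c s = 0 := by
        have := h0' c (Finset.mem_univ c)
        exact (mul_eq_zero.1 this).resolve_left hc
      have hμs : μ c s = 0 := ((hred c).resolve_left hc).1 hνs
      simp [hμs]
  have hνcb : ∀ c, w c ≠ 0 → ν c ≪ ∑ c', w c' • ν c' := by
    intro c hc
    refine Measure.AbsolutelyContinuous.mk fun s hs h0 => ?_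
    rw [happly] at h0
    have := Finset.sum_eq_zero_iff.1 h0 c (Finset.mem_univ c)
    exact (mul_eq_zero.1 this).resolve_left hc
  set νb := ∑ c, w c • ν c with hνbdef
  haveI hνbF : IsFiniteMeasure νb := ⟨by rw [measure_univ]; exact ENNReal.one_lt_top⟩
  have hsumμ := rnDeriv_finset_sum (fun c => w c • μ c) νb (fun c => by
      haveI := hμ c
      constructor
      rw [Measure.smul_apply, measure_univ, smul_eq_mul, mul_one]
      exact (hwt c).lt_top) Finset.univ
  have hsumν := rnDeriv_finset_sum (fun c => w c • ν c) νb (fun c => by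
      haveI := hν c
      constructor
      rw [Measure.smul_apply, measure_univ, smul_eq_mul, mul_one]
      exact (hwt c).lt_top) Finset.univ
  have hsmulμ : ∀ᵐ x ∂νb, ∀ c, (w c • μ c).rnDeriv νb x = w c * (μ c).rnDeriv νb x := by
    rw [ae_all_iff]
    intro c
    haveI := hμ c
    filter_upwards [Measure.rnDeriv_smul_left_of_ne_top (μ c) νb (hwt c)] with x hx
    rw [hx, Pi.smul_apply, smul_eq_mul]
  have hsmulν : ∀ᵐ x ∂νb, ∀ c, (w c • ν c).rnDeriv νb x = w c * (ν c).rnDeriv νb x := by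
    rw [ae_all_iff]
    intro c
    haveI := hν c
    filter_upwards [Measure.rnDeriv_smul_left_of_ne_top (ν c) νb (hwt c)] with x hx
    rw [hx, Pi.smul_apply, smul_eq_mul]
  rw [klDiv_eq_lintegral_Kfun _ _ hac]
  have hstep1 : ∫⁻ x, Kfun ((∑ c, w c • μ c).rnDeriv νb x) 1 ∂νb
      = ∫⁻ x, Kfun (∑ c, w c * (μ c).rnDeriv νb x) (∑ c, w c * (ν c).rnDeriv νb x) ∂νb := by
    refine lintegral_congr_ae ?_
    filter_upwards [hsumμ, hsumν, hsmulμ, hsmulν, Measure.rnDeriv_self νb]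
      with x h1 h2 h3 h4 h5
    congr 1
    · rw [h1]
      exact Finset.sum_congr rfl fun c _ => h3 c
    · rw [show (1 : ℝ≥0∞) = νb.rnDeriv νb x from h5.symm, h2]
      exact Finset.sum_congr rfl fun c _ => h4 c
  rw [hstep1]
  have hstep2 : ∫⁻ x, Kfun (∑ c, w c * (μ c).rnDeriv νb x) (∑ c, w c * (ν c).rnDeriv νb x) ∂νb
      ≤ ∑ c, ∫⁻ x, Kfun (w c * (μ c).rnDeriv νb x) (w c * (ν c).rnDeriv νb x) ∂νb := by
    rw [← lintegral_finset_sum]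
    · exact lintegral_mono fun x => Kfun_finset_sum Finset.univ _ _
    · intro c _
      exact measurable_Kfun ((Measure.measurable_rnDeriv _ _).const_mul _)
        ((Measure.measurable_rnDeriv _ _).const_mul _)
  refine hstep2.trans (Finset.sum_le_sum fun c _ => ?_)
  have hKsmul : ∫⁻ x, Kfun (w c * (μ c).rnDeriv νb x) (w c * (ν c).rnDeriv νb x) ∂νb
      = w c * ∫⁻ x, Kfun ((μ c).rnDeriv νb x) ((ν c).rnDeriv νb x) ∂νb := by
    rw [← lintegral_const_mul _ (measurable_Kfun (Measure.measurable_rnDeriv _ _)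
      (Measure.measurable_rnDeriv _ _))]
    exact lintegral_congr fun x => Kfun_smul (hwt c) _ _
  rw [hKsmul]
  rcases eq_or_ne (w c) 0 with hc | hc
  · simp [hc]
  · obtain ⟨hacc, hintc⟩ := (hred c).resolve_left hc
    haveI := hμ c
    haveI := hν c
    rw [lintegral_Kfun_base (μ c) (ν c) νb hacc (hνcb c hc),
      ← klDiv_eq_lintegral_Kfun (μ c) (ν c) hacc]
end


/-- Proposition 1 specialized to the KL divergence: if for every backbone `θ` and condition `c`,
approximating `q(·|c)` by tuning only the embedding is strictly simpler (in KL) than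
approximating the marginal `q̄`, then the optimal conditional model strictly outperforms the
optimal unconditional model. -/
theorem conditional_better_of_pointwise_simpler_klDiv
    {X : Type} [MeasurableSpace X] {C : Type} [Fintype C] [Nonempty C]
    (w : C → ℝ≥0∞) (hw : ∑ c, w c = 1)
    (q : C → Measure X) (hq : ∀ c, IsProbabilityMeasure (q c))
    {Θ ℰ : Type} [Nonempty Θ] [Nonempty ℰ]
    (p : Θ → ℰ → Measure X) (hp : ∀ θ E, IsProbabilityMeasure (p θ E))
    (hsimpler : ∀ θ c, (⨅ E, klDiv (q c) (p θ E)) < ⨅ E, klDiv (∑ c', w c' • q c') (p θ E))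
    (θu : Θ) (Eu : ℰ)
    (hu : klDiv (∑ c, w c • q c) (p θu Eu) = ⨅ θ, ⨅ E, klDiv (∑ c, w c • q c) (p θ E))
    (θc : Θ) (φc : C → ℰ)
    (hc : ∑ c, w c * klDiv (q c) (p θc (φc c))
        = ⨅ θ, ⨅ φ : C → ℰ, ∑ c, w c * klDiv (q c) (p θ (φ c))) :
    klDiv (∑ c, w c • q c) (∑ c, w c • p θc (φc c)) < klDiv (∑ c, w c • q c) (p θu Eu) := by
  classical
  have hAinf : (⨅ E, klDiv (∑ c', w c' • q c') (p θu E))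
      = klDiv (∑ c, w c • q c) (p θu Eu) := by
    apply le_antisymm
    · exact iInf_le _ Eu
    · rw [hu]
      exact iInf_le _ θu
  have hlt : ∀ c, (⨅ E, klDiv (q c) (p θu E)) < klDiv (∑ c, w c • q c) (p θu Eu) := by
    intro c
    rw [← hAinf]
    exact hsimpler θu c
  choose Ec hEc using fun c => iInf_lt_iff.mp (hlt c)
  obtain ⟨c₀, hc₀⟩ := Finite.exists_max (fun c => klDiv (q c) (p θu (Ec c)))
  have hV : (∑ c, w c * klDiv (q c) (p θc (φc c))) ≤ klDiv (q c₀) (p θu (Ec c₀)) := by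
    calc ∑ c, w c * klDiv (q c) (p θc (φc c))
        ≤ ∑ c, w c * klDiv (q c) (p θu (Ec c)) := by
          rw [hc]
          exact iInf_le_of_le θu (iInf_le _ Ec)
      _ ≤ ∑ c, w c * klDiv (q c₀) (p θu (Ec c₀)) :=
          Finset.sum_le_sum fun c _ => mul_le_mul_right (hc₀ c) _
      _ = klDiv (q c₀) (p θu (Ec c₀)) := by rw [← Finset.sum_mul, hw, one_mul]
  have hmix := klDiv_mix_le w hw q (fun c => p θc (φc c)) hq (fun c => hp θc (φc c))
  exact hmix.trans_lt (hV.trans_lt (hEc c₀))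
end
end

section
/- Let D be the Kullback–Leibler divergence. Suppose (θ_u, E_u) attains the infimum of KL(q̄ ‖ p θ E) over (θ, E), that (θ_c, φ_c) attains the infimum of ∑_c w c * KL(q c ‖ p θ (φ c)) over θ ∈ Θ and φ : C → ℰ, and that ⨅_{θ ∈ Θ} ∑_c w c * (⨅_{E ∈ ℰ} KL(q c ‖ p θ E)) < ⨅_{θ ∈ Θ, E ∈ ℰ} KL(q̄ ‖ p θ E). Then KL(q̄ ‖ ∑_c (w c) • p θ_c (φ_c c)) < KL(q̄ ‖ p θ_u E_u). (Lemma 1 specialized to the KL divergence, whose joint convexity holds unconditionally.) -/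
open MeasureTheory ENNReal

namespace KLAux

/-! ### The real function `F a b = a log a - a log b - a + b` and its properties -/

noncomputable def F (a b : ℝ) : ℝ := a * Real.log a - a * Real.log b - a + b

lemma F_zero_left (b : ℝ) : F 0 b = b := by simp [F]

lemma key {x y : ℝ} (hx : 0 < x) (hy : 0 < y) :
    x - y ≤ x * Real.log x - x * Real.log y := by
  have h := Real.log_le_sub_one_of_pos (div_pos hy hx)
  rw [Real.log_div hy.ne' hx.ne'] at h
  have h2 := mul_le_mul_of_nonneg_left h hx.le
  have h3 : x * (y / x - 1) = y - x := by field_simp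
  nlinarith

lemma F_nonneg {a b : ℝ} (ha : 0 ≤ a) (hb : 0 ≤ b) (hab : b = 0 → a = 0) :
    0 ≤ F a b := by
  rcases eq_or_lt_of_le ha with h | h
  · simp [F, ← h, hb]
  · have hb' : 0 < b := by
      rcases eq_or_lt_of_le hb with h0 | h0
      · exact absurd (hab h0.symm) (ne_of_gt h)
      · exact h0
    have := key h hb'
    simp only [F]; linarith

lemma F_add_le {a b a' b' : ℝ} (ha : 0 ≤ a) (hb : 0 ≤ b) (ha' : 0 ≤ a') (hb' : 0 ≤ b')
    (hab : b = 0 → a = 0) (hab' : b' = 0 → a' = 0) :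
    F (a + a') (b + b') ≤ F a b + F a' b' := by
  rcases eq_or_lt_of_le ha with h0 | h0
  · -- a = 0
    rcases eq_or_lt_of_le ha' with h0' | h0'
    · rw [← h0, ← h0']
      simp [F_zero_left]
    · have hb'0 : 0 < b' := by
        rcases eq_or_lt_of_le hb' with hh | hh
        · exact absurd (hab' hh.symm) (ne_of_gt h0')
        · exact hh
      have hlog : Real.log b' ≤ Real.log (b + b') := Real.log_le_log hb'0 (by linarith)
      have := mul_le_mul_of_nonneg_left hlog ha'
      simp only [F, ← h0]
      ring_nf
      nlinarith
  · rcases eq_or_lt_of_le ha' with h0' | h0'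
    · -- a' = 0
      have hb0 : 0 < b := by
        rcases eq_or_lt_of_le hb with hh | hh
        · exact absurd (hab hh.symm) (ne_of_gt h0)
        · exact hh
      have hlog : Real.log b ≤ Real.log (b + b') := Real.log_le_log hb0 (by linarith)
      have := mul_le_mul_of_nonneg_left hlog ha
      simp only [F, ← h0']
      ring_nf
      nlinarith
    · -- a > 0, a' > 0, hence b > 0, b' > 0
      have hb0 : 0 < b := by
        rcases eq_or_lt_of_le hb with hh | hh
        · exact absurd (hab hh.symm) (ne_of_gt h0)
        · exact hh
      have hb'0 : 0 < b' := by
        rcases eq_or_lt_of_le hb' with hh | hh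
        · exact absurd (hab' hh.symm) (ne_of_gt h0')
        · exact hh
      have hS : 0 < a + a' := by linarith
      have hT : 0 < b + b' := by linarith
      have hy1 : 0 < b * (a + a') / (b + b') := by positivity
      have hy2 : 0 < b' * (a + a') / (b + b') := by positivity
      have hlog1 : Real.log (b * (a + a') / (b + b'))
          = Real.log b + Real.log (a + a') - Real.log (b + b') := by
        rw [Real.log_div (by positivity) hT.ne', Real.log_mul hb0.ne' hS.ne']
      have hlog2 : Real.log (b' * (a + a') / (b + b'))
          = Real.log b' + Real.log (a + a') - Real.log (b + b') := by
        rw [Real.log_div (by positivity) hT.ne', Real.log_mul hb'0.ne' hS.ne']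
      have k1 := key h0 hy1
      have k2 := key h0' hy2
      rw [hlog1] at k1
      rw [hlog2] at k2
      have hsum : b * (a + a') / (b + b') + b' * (a + a') / (b + b') = a + a' := by
        field_simp
      simp only [F]
      nlinarith [k1, k2, hsum]

lemma F_smul {c a b : ℝ} (hc : 0 ≤ c) (ha : 0 ≤ a) (hb : 0 ≤ b) (hab : b = 0 → a = 0) :
    F (c * a) (c * b) = c * F a b := by
  rcases eq_or_lt_of_le hc with hc0 | hc0
  · simp [F, ← hc0]
  rcases eq_or_lt_of_le ha with ha0 | ha0
  · rw [← ha0, mul_zero, F_zero_left, F_zero_left]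
  · have hb0 : 0 < b := by
      rcases eq_or_lt_of_le hb with hh | hh
      · exact absurd (hab hh.symm) (ne_of_gt ha0)
      · exact hh
    simp only [F]
    rw [Real.log_mul hc0.ne' ha0.ne', Real.log_mul hc0.ne' hb0.ne']
    ring

lemma F_sum_le {ι : Type*} (s : Finset ι) (a b : ι → ℝ)
    (ha : ∀ i ∈ s, 0 ≤ a i) (hb : ∀ i ∈ s, 0 ≤ b i) (hab : ∀ i ∈ s, b i = 0 → a i = 0) :
    F (∑ i ∈ s, a i) (∑ i ∈ s, b i) ≤ ∑ i ∈ s, F (a i) (b i) := by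
  classical
  induction s using Finset.cons_induction with
  | empty => simp [F]
  | cons i s his ih =>
    rw [Finset.sum_cons, Finset.sum_cons, Finset.sum_cons]
    have ha' : ∀ j ∈ s, 0 ≤ a j := fun j hj => ha j (Finset.mem_cons_of_mem hj)
    have hb' : ∀ j ∈ s, 0 ≤ b j := fun j hj => hb j (Finset.mem_cons_of_mem hj)
    have hab' : ∀ j ∈ s, b j = 0 → a j = 0 := fun j hj => hab j (Finset.mem_cons_of_mem hj)
    have hsa : 0 ≤ ∑ j ∈ s, a j := Finset.sum_nonneg ha'
    have hsb : 0 ≤ ∑ j ∈ s, b j := Finset.sum_nonneg hb'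
    have hsab : (∑ j ∈ s, b j) = 0 → (∑ j ∈ s, a j) = 0 := by
      intro h
      have h0 := (Finset.sum_eq_zero_iff_of_nonneg hb').mp h
      exact Finset.sum_eq_zero fun j hj => hab' j hj (h0 j hj)
    refine le_trans (F_add_le (ha i (Finset.mem_cons_self i s)) (hb i (Finset.mem_cons_self i s))
      hsa hsb (hab i (Finset.mem_cons_self i s)) hsab) ?_
    exact add_le_add le_rfl (ih ha' hb' hab')

/-! ### Measure-theoretic lemmas -/

variable {X : Type} [MeasurableSpace X]

lemma rnDeriv_zero_of_rnDeriv_zero {μ' ν' ν : Measure X} [IsFiniteMeasure μ']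
    [SigmaFinite ν'] [SigmaFinite ν]
    (hμν' : μ' ≪ ν') (hν'ν : ν' ≪ ν) :
    ∀ᵐ x ∂ν, ν'.rnDeriv ν x = 0 → μ'.rnDeriv ν x = 0 := by
  have hA : MeasurableSet {x | ν'.rnDeriv ν x = 0} :=
    Measure.measurable_rnDeriv ν' ν (measurableSet_singleton 0)
  have hν'A : ν' {x | ν'.rnDeriv ν x = 0} = 0 := by
    rw [← Measure.setLIntegral_rnDeriv hν'ν]
    rw [setLIntegral_congr_fun hA (fun x hx => hx)]
    simp
  have hμ'A : μ' {x | ν'.rnDeriv ν x = 0} = 0 := hμν' hν'A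
  rw [← Measure.setLIntegral_rnDeriv (hμν'.trans hν'ν)] at hμ'A
  have h := (lintegral_eq_zero_iff (Measure.measurable_rnDeriv μ' ν)).mp hμ'A
  rw [Filter.EventuallyEq, ae_restrict_iff' hA] at h
  filter_upwards [h] with x hx hx0 using hx hx0

lemma F_measurable (μ' ν' ν : Measure X) :
    Measurable (fun x => F ((μ'.rnDeriv ν x).toReal) ((ν'.rnDeriv ν x).toReal)) := by
  have m1 : Measurable fun x => (μ'.rnDeriv ν x).toReal :=
    (Measure.measurable_rnDeriv μ' ν).ennreal_toReal
  have m2 : Measurable fun x => (ν'.rnDeriv ν x).toReal :=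
    (Measure.measurable_rnDeriv ν' ν).ennreal_toReal
  exact (((m1.mul (Real.measurable_log.comp m1)).sub
    (m1.mul (Real.measurable_log.comp m2))).sub m1).add m2

/-- Key identity: the KL divergence equals a lintegral of the nonnegative integrand
`F (dμ'/dν) (dν'/dν)` against any common dominating measure `ν`. -/
lemma klDiv_eq_lintegral {μ' ν' ν : Measure X}
    [IsProbabilityMeasure μ'] [IsProbabilityMeasure ν'] [IsFiniteMeasure ν]
    (hμν' : μ' ≪ ν') (hν'ν : ν' ≪ ν) :
    klDiv μ' ν'
      = ∫⁻ x, ENNReal.ofReal (F ((μ'.rnDeriv ν x).toReal) ((ν'.rnDeriv ν x).toReal)) ∂ν := by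
  classical
  have hμν : μ' ≪ ν := hμν'.trans hν'ν
  set r₁ : X → ℝ := fun x => (μ'.rnDeriv ν x).toReal with hr₁
  set r₂ : X → ℝ := fun x => (ν'.rnDeriv ν x).toReal with hr₂
  set G : X → ℝ := fun x => r₁ x * llr μ' ν' x - r₁ x + r₂ x with hG
  have h1 := Measure.rnDeriv_mul_rnDeriv (κ := ν) hμν'
  have h3 := Measure.rnDeriv_lt_top μ' ν
  have h4 := Measure.rnDeriv_lt_top ν' ν
  have h5 := rnDeriv_zero_of_rnDeriv_zero hμν' hν'ν
  have hae : ∀ᵐ x ∂ν, F (r₁ x) (r₂ x) = G x ∧ 0 ≤ G x := by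
    filter_upwards [h1, h3, h4, h5] with x hx1 hx3 hx4 hx5
    by_cases h0 : μ'.rnDeriv ν x = 0
    · constructor
      · simp [F, hG, hr₁, hr₂, h0]
      · simp only [hG, hr₁, hr₂, h0]
        simp
    · have hd2 : ν'.rnDeriv ν x ≠ 0 := fun h => h0 (hx5 h)
      have hp1 : 0 < r₁ x := ENNReal.toReal_pos h0 hx3.ne
      have hp2 : 0 < r₂ x := ENNReal.toReal_pos hd2 hx4.ne
      have hx1' : μ'.rnDeriv ν' x * ν'.rnDeriv ν x = μ'.rnDeriv ν x := hx1
      have ht_top : μ'.rnDeriv ν' x ≠ ∞ := by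
        intro h
        rw [h, ENNReal.top_mul hd2] at hx1'
        exact hx3.ne hx1'.symm
      have htt : (μ'.rnDeriv ν' x).toReal * r₂ x = r₁ x := by
        rw [hr₁, hr₂, ← ENNReal.toReal_mul, hx1']
      have hlt : llr μ' ν' x = Real.log (r₁ x) - Real.log (r₂ x) := by
        have hv : (μ'.rnDeriv ν' x).toReal = r₁ x / r₂ x := by
          rw [eq_div_iff hp2.ne']; exact htt
        rw [llr, hv, Real.log_div hp1.ne' hp2.ne']
      have heq : F (r₁ x) (r₂ x) = G x := by
        simp only [F, hG, hlt]; ring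
      exact ⟨heq, heq ▸ F_nonneg hp1.le hp2.le (fun h => absurd h hp2.ne')⟩
  have hG_eq : ∫⁻ x, ENNReal.ofReal (F (r₁ x) (r₂ x)) ∂ν = ∫⁻ x, ENNReal.ofReal (G x) ∂ν :=
    lintegral_congr_ae <| hae.mono fun x hx => by dsimp only; rw [hx.1]
  have hGnn : 0 ≤ᵐ[ν] G := hae.mono fun x hx => hx.2
  have hr1int : Integrable r₁ ν := Measure.integrable_toReal_rnDeriv
  have hr2int : Integrable r₂ ν := Measure.integrable_toReal_rnDeriv
  have hIff : Integrable (llr μ' ν') μ' ↔ Integrable (fun x => r₁ x * llr μ' ν' x) ν := by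
    rw [← integrable_rnDeriv_smul_iff hμν]
    simp [smul_eq_mul, hr₁]
  by_cases hint : Integrable (llr μ' ν') μ'
  · have hint1 : Integrable (fun x => r₁ x * llr μ' ν' x) ν := hIff.mp hint
    have hsub : Integrable (fun x => r₁ x * llr μ' ν' x - r₁ x) ν := hint1.sub hr1int
    have hGint : Integrable G ν := hsub.add hr2int
    rw [klDiv, if_pos ⟨hμν', hint⟩, hG_eq, ← ofReal_integral_eq_lintegral_ofReal hGint hGnn]
    congr 1
    have e1 : ∫ x, r₁ x * llr μ' ν' x ∂ν = ∫ x, llr μ' ν' x ∂μ' := by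
      have := integral_rnDeriv_smul (f := llr μ' ν') hμν
      simpa [smul_eq_mul, hr₁] using this
    have e2 : ∫ x, r₁ x ∂ν = 1 := by
      rw [hr₁, Measure.integral_toReal_rnDeriv hμν]; simp
    have e3 : ∫ x, r₂ x ∂ν = 1 := by
      rw [hr₂, Measure.integral_toReal_rnDeriv hν'ν]; simp
    have e4 : ∫ x, G x ∂ν = ∫ x, r₁ x * llr μ' ν' x - r₁ x + r₂ x ∂ν := rfl
    rw [e4, integral_add hsub hr2int, integral_sub hint1 hr1int, e1, e2, e3]
    ring
  · rw [klDiv, if_neg (fun h => hint h.2), hG_eq]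
    rcases eq_or_ne (∫⁻ x, ENNReal.ofReal (G x) ∂ν) ∞ with hL | hL
    · rw [hL]
    · exfalso
      apply hint
      have hGmeas : Measurable G := by
        have m1 : Measurable r₁ := (Measure.measurable_rnDeriv μ' ν).ennreal_toReal
        have m2 : Measurable r₂ := (Measure.measurable_rnDeriv ν' ν).ennreal_toReal
        exact ((m1.mul (measurable_llr μ' ν')).sub m1).add m2
      have hGint : Integrable G ν := by
        refine ⟨hGmeas.aestronglyMeasurable, ?_⟩
        rw [hasFiniteIntegral_iff_ofReal hGnn]
        exact hL.lt_top
      have hint1 : Integrable (fun x => r₁ x * llr μ' ν' x) ν := by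
        have h' : Integrable (fun x => G x + r₁ x - r₂ x) ν := (hGint.add hr1int).sub hr2int
        exact h'.congr (ae_of_all _ fun x => by dsimp only [hG]; ring)
      exact hIff.mpr hint1

lemma rnDeriv_finset_sum {ι : Type*} (s : Finset ι) (w : ι → ℝ≥0∞) (hw : ∀ i, w i ≠ ∞)
    (ρs : ι → Measure X) (hρ : ∀ i, IsFiniteMeasure (ρs i)) (ν : Measure X) [SigmaFinite ν] :
    (∑ i ∈ s, w i • ρs i).rnDeriv ν =ᵐ[ν] fun x => ∑ i ∈ s, w i * (ρs i).rnDeriv ν x := by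
  classical
  have hfin : ∀ (t : Finset ι), IsFiniteMeasure (∑ i ∈ t, w i • ρs i) := by
    intro t
    constructor
    rw [Measure.finset_sum_apply]
    refine ENNReal.sum_lt_top.mpr fun i _ => ?_
    haveI := hρ i
    rw [Measure.smul_apply, smul_eq_mul]
    exact ENNReal.mul_lt_top (hw i).lt_top (measure_lt_top _ _)
  induction s using Finset.cons_induction with
  | empty => simp only [Finset.sum_empty]; exact Measure.rnDeriv_zero ν
  | cons i s his ih =>
    haveI := hρ i
    haveI : IsFiniteMeasure (w i • ρs i) := by
      constructor
      rw [Measure.smul_apply, smul_eq_mul]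
      exact ENNReal.mul_lt_top (hw i).lt_top (measure_lt_top _ _)
    haveI := hfin s
    rw [Finset.sum_cons]
    have h1 := Measure.rnDeriv_add (w i • ρs i) (∑ j ∈ s, w j • ρs j) ν
    have h2 := Measure.rnDeriv_smul_left_of_ne_top (ρs i) ν (hw i)
    filter_upwards [h1, h2, ih] with x hx1 hx2 hx3
    rw [hx1, Finset.sum_cons, ← hx3]
    simp only [Pi.add_apply, hx2, Pi.smul_apply, smul_eq_mul]

/-- Joint convexity of KL: the KL divergence of mixtures is at most the mixture of
KL divergences. -/
lemma klDiv_mixture_le {C : Type} [Fintype C] (w : C → ℝ≥0∞) (hw : ∑ c, w c = 1)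
    (μs νs : C → Measure X) (hμs : ∀ c, IsProbabilityMeasure (μs c))
    (hνs : ∀ c, IsProbabilityMeasure (νs c)) :
    klDiv (∑ c, w c • μs c) (∑ c, w c • νs c) ≤ ∑ c, w c * klDiv (μs c) (νs c) := by
  classical
  have hwle : ∀ c, w c ≤ 1 := fun c =>
    hw ▸ Finset.single_le_sum (fun _ _ => zero_le) (Finset.mem_univ c)
  have hwtop : ∀ c, w c ≠ ∞ := fun c => ne_top_of_le_ne_top ENNReal.one_ne_top (hwle c)
  by_cases hbad : ∃ c, w c ≠ 0 ∧ klDiv (μs c) (νs c) = ∞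
  · obtain ⟨c, hc0, hcinf⟩ := hbad
    have : ∑ c, w c * klDiv (μs c) (νs c) = ∞ := by
      rw [eq_top_iff]
      calc (∞ : ℝ≥0∞) = w c * klDiv (μs c) (νs c) := by rw [hcinf, ENNReal.mul_top hc0]
        _ ≤ _ := Finset.single_le_sum (f := fun c => w c * klDiv (μs c) (νs c))
            (fun _ _ => zero_le) (Finset.mem_univ c)
    rw [this]; exact le_top
  push_neg at hbad
  have hac : ∀ c, w c ≠ 0 → μs c ≪ νs c ∧ Integrable (llr (μs c) (νs c)) (μs c) := by
    intro c hc
    by_contra h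
    exact hbad c hc (by rw [klDiv, if_neg h])
  set ν : Measure X := ∑ c, w c • νs c with hνdef
  set μ : Measure X := ∑ c, w c • μs c with hμdef
  haveI : ∀ c, IsProbabilityMeasure (μs c) := hμs
  haveI : ∀ c, IsProbabilityMeasure (νs c) := hνs
  have hνuniv : ν Set.univ = 1 := by
    rw [hνdef, Measure.finset_sum_apply]
    simp only [Measure.smul_apply, smul_eq_mul, measure_univ, mul_one]
    exact hw
  have hμuniv : μ Set.univ = 1 := by
    rw [hμdef, Measure.finset_sum_apply]
    simp only [Measure.smul_apply, smul_eq_mul, measure_univ, mul_one]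
    exact hw
  haveI : IsProbabilityMeasure ν := ⟨hνuniv⟩
  haveI : IsProbabilityMeasure μ := ⟨hμuniv⟩
  have hνc : ∀ c, w c ≠ 0 → νs c ≪ ν := by
    intro c hc
    refine Measure.AbsolutelyContinuous.mk fun s _ h0 => ?_
    rw [hνdef, Measure.finset_sum_apply] at h0
    have := (Finset.sum_eq_zero_iff.mp h0) c (Finset.mem_univ c)
    rw [Measure.smul_apply, smul_eq_mul] at this
    exact (mul_eq_zero.mp this).resolve_left hc
  have hμν : μ ≪ ν := by
    refine Measure.AbsolutelyContinuous.mk fun s hs h0 => ?_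
    rw [hμdef, Measure.finset_sum_apply]
    refine Finset.sum_eq_zero fun c _ => ?_
    rcases eq_or_ne (w c) 0 with h | h
    · simp [h]
    · rw [Measure.smul_apply, smul_eq_mul, (hac c h).1 (hνc c h h0), mul_zero]
  -- rnDeriv of the sums
  have hsumμ := rnDeriv_finset_sum Finset.univ w hwtop μs (fun c => inferInstance) ν
  have hsumν := rnDeriv_finset_sum Finset.univ w hwtop νs (fun c => inferInstance) ν
  have hR1 : ∀ᵐ x ∂ν, (μ.rnDeriv ν x).toReal
      = ∑ c, (w c).toReal * ((μs c).rnDeriv ν x).toReal := by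
    filter_upwards [hsumμ, ae_all_iff.mpr fun c => Measure.rnDeriv_lt_top (μs c) ν]
      with x hx hfin
    rw [hμdef, hx, ENNReal.toReal_sum fun c _ =>
      ENNReal.mul_ne_top (hwtop c) (hfin c).ne]
    simp [ENNReal.toReal_mul]
  have hR2 : ∀ᵐ x ∂ν, (ν.rnDeriv ν x).toReal
      = ∑ c, (w c).toReal * ((νs c).rnDeriv ν x).toReal := by
    filter_upwards [hsumν, ae_all_iff.mpr fun c => Measure.rnDeriv_lt_top (νs c) ν]
      with x hx hfin
    rw [show ν.rnDeriv ν x = (∑ i, w i • νs i).rnDeriv ν x from rfl, hx, ENNReal.toReal_sum fun c _ =>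
      ENNReal.mul_ne_top (hwtop c) (hfin c).ne]
    simp [ENNReal.toReal_mul]
  -- a.e. side condition: density of νs c zero implies density of μs c zero
  have hside : ∀ᵐ x ∂ν, ∀ c, w c ≠ 0 →
      (((νs c).rnDeriv ν x).toReal = 0 → ((μs c).rnDeriv ν x).toReal = 0) := by
    rw [ae_all_iff]
    intro c
    by_cases hc : w c = 0
    · exact ae_of_all _ fun x h => absurd hc h
    · filter_upwards [rnDeriv_zero_of_rnDeriv_zero (hac c hc).1 (hνc c hc),
        Measure.rnDeriv_lt_top (νs c) ν] with x hx hfin _ h0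
      rcases ENNReal.toReal_eq_zero_iff _ |>.mp h0 with h | h
      · rw [hx h]; simp
      · exact absurd h hfin.ne
  -- pointwise inequality
  have hptwise : ∀ᵐ x ∂ν,
      ENNReal.ofReal (F ((μ.rnDeriv ν x).toReal) ((ν.rnDeriv ν x).toReal))
        ≤ ∑ c, w c * ENNReal.ofReal
            (F (((μs c).rnDeriv ν x).toReal) (((νs c).rnDeriv ν x).toReal)) := by
    filter_upwards [hR1, hR2, hside] with x h1 h2 h3
    rw [h1, h2]
    set a : C → ℝ := fun c => (w c).toReal * ((μs c).rnDeriv ν x).toReal with hadef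
    set b : C → ℝ := fun c => (w c).toReal * ((νs c).rnDeriv ν x).toReal with hbdef
    have hanneg : ∀ c ∈ Finset.univ, (0:ℝ) ≤ a c := fun c _ => by positivity
    have hbnneg : ∀ c ∈ Finset.univ, (0:ℝ) ≤ b c := fun c _ => by positivity
    have habz : ∀ c ∈ Finset.univ, b c = 0 → a c = 0 := by
      intro c _ h0
      by_cases hc : w c = 0
      · simp [hadef, hc]
      · rcases mul_eq_zero.mp h0 with h | h
        · simp [hadef, h]
        · simp [hadef, h3 c hc h]
    calc ENNReal.ofReal (F (∑ c, a c) (∑ c, b c))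
        ≤ ENNReal.ofReal (∑ c, F (a c) (b c)) :=
          ENNReal.ofReal_le_ofReal (F_sum_le Finset.univ a b hanneg hbnneg habz)
      _ = ∑ c, ENNReal.ofReal (F (a c) (b c)) := by
          rw [ENNReal.ofReal_sum_of_nonneg fun c hc =>
            F_nonneg (hanneg c hc) (hbnneg c hc) (habz c hc)]
      _ ≤ ∑ c, w c * ENNReal.ofReal
            (F (((μs c).rnDeriv ν x).toReal) (((νs c).rnDeriv ν x).toReal)) := by
          refine Finset.sum_le_sum fun c _ => ?_
          by_cases hc : w c = 0
          · simp [hadef, hbdef, hc, F_zero_left]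
          · have hFs : F (a c) (b c) = (w c).toReal
                * F (((μs c).rnDeriv ν x).toReal) (((νs c).rnDeriv ν x).toReal) :=
              F_smul ENNReal.toReal_nonneg ENNReal.toReal_nonneg ENNReal.toReal_nonneg
                (h3 c hc)
            rw [hFs, ENNReal.ofReal_mul ENNReal.toReal_nonneg,
              ENNReal.ofReal_toReal (hwtop c)]
  -- integrate
  have hmeas : ∀ c : C, Measurable fun x => ENNReal.ofReal
      (F (((μs c).rnDeriv ν x).toReal) (((νs c).rnDeriv ν x).toReal)) :=
    fun c => (F_measurable (μs c) (νs c) ν).ennreal_ofReal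
  calc klDiv μ ν
      = ∫⁻ x, ENNReal.ofReal (F ((μ.rnDeriv ν x).toReal) ((ν.rnDeriv ν x).toReal)) ∂ν :=
        klDiv_eq_lintegral hμν Measure.AbsolutelyContinuous.rfl
    _ ≤ ∫⁻ x, ∑ c, w c * ENNReal.ofReal
          (F (((μs c).rnDeriv ν x).toReal) (((νs c).rnDeriv ν x).toReal)) ∂ν :=
        lintegral_mono_ae hptwise
    _ = ∑ c, w c * ∫⁻ x, ENNReal.ofReal
          (F (((μs c).rnDeriv ν x).toReal) (((νs c).rnDeriv ν x).toReal)) ∂ν := by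
        rw [lintegral_finset_sum _ fun c _ => (hmeas c).const_mul (w c)]
        exact Finset.sum_congr rfl fun c _ => lintegral_const_mul (w c) (hmeas c)
    _ = ∑ c, w c * klDiv (μs c) (νs c) := by
        refine Finset.sum_congr rfl fun c _ => ?_
        rcases eq_or_ne (w c) 0 with h | h
        · simp [h]
        · rw [klDiv_eq_lintegral (hac c h).1 (hνc c h)]

/-- Decoupling the infimum over embedding functions. -/
lemma iInf_sum_le {C ℰ : Type} [Fintype C] [Nonempty C] [Nonempty ℰ] (w : C → ℝ≥0∞)
    (hw : ∑ c, w c = 1)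
    (K : C → ℰ → ℝ≥0∞) :
    (⨅ φ : C → ℰ, ∑ c, w c * K c (φ c)) ≤ ∑ c, w c * ⨅ E, K c E := by
  classical
  have hwle : ∀ c, w c ≤ 1 := fun c =>
    hw ▸ Finset.single_le_sum (fun _ _ => zero_le) (Finset.mem_univ c)
  refine ENNReal.le_of_forall_pos_le_add fun ε hε hlt => ?_
  set n : ℕ := Fintype.card C with hn
  have hn0 : (n : ℝ≥0∞) ≠ 0 := by
    simp [hn] 
  have hδ : (0:ℝ≥0∞) < ε / n := ENNReal.div_pos (by exact_mod_cast hε.ne') (by simp)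
  have hchoice : ∀ c, ∃ E : ℰ, w c * K c E ≤ w c * (⨅ E, K c E) + ε / n := by
    intro c
    by_cases hc : w c = 0
    · exact ⟨Classical.arbitrary ℰ, by simp [hc]⟩
    by_cases hinf : (⨅ E, K c E) = ∞
    · exfalso
      have : w c * (⨅ E, K c E) = ∞ := by rw [hinf, ENNReal.mul_top hc]
      have hle : (∞:ℝ≥0∞) ≤ ∑ c, w c * ⨅ E, K c E := by
        rw [← this]
        exact Finset.single_le_sum (f := fun c => w c * ⨅ E, K c E)
          (fun _ _ => zero_le) (Finset.mem_univ c)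
      exact (hlt.trans_le le_top).ne (top_le_iff.mp hle)
    · have : (⨅ E, K c E) < (⨅ E, K c E) + ε / n := ENNReal.lt_add_right hinf hδ.ne'
      obtain ⟨E, hE⟩ := iInf_lt_iff.mp this
      refine ⟨E, ?_⟩
      calc w c * K c E ≤ w c * ((⨅ E, K c E) + ε / n) :=
            mul_le_mul_right hE.le _
        _ = w c * (⨅ E, K c E) + w c * (ε / n) := mul_add _ _ _
        _ ≤ w c * (⨅ E, K c E) + ε / n := by
            gcongr
            calc w c * (ε / n) ≤ 1 * (ε / n) := mul_le_mul_left (hwle c) _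
              _ = ε / n := one_mul _
  choose φ hφ using hchoice
  calc (⨅ φ : C → ℰ, ∑ c, w c * K c (φ c)) ≤ ∑ c, w c * K c (φ c) := iInf_le _ φ
    _ ≤ ∑ c, (w c * (⨅ E, K c E) + ε / n) := Finset.sum_le_sum fun c _ => hφ c
    _ = (∑ c, w c * ⨅ E, K c E) + n * (ε / n) := by
        rw [Finset.sum_add_distrib, Finset.sum_const, nsmul_eq_mul]
        simp [hn]
    _ ≤ (∑ c, w c * ⨅ E, K c E) + ε := by
        gcongr
        exact ENNReal.mul_div_le

end KLAux

/-- Lemma 1 specialized to the KL divergence: if the optimal decoupled conditional objective is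
strictly smaller than the optimal unconditional objective, then the marginal of the optimal
conditional model is strictly closer (in KL) to the data distribution than the optimal
unconditional model. -/
theorem conditional_better_of_gap_klDiv
    {X : Type} [MeasurableSpace X] {C : Type} [Fintype C] [Nonempty C]
    (w : C → ℝ≥0∞) (hw : ∑ c, w c = 1)
    (q : C → Measure X) (hq : ∀ c, IsProbabilityMeasure (q c))
    {Θ ℰ : Type} [Nonempty Θ] [Nonempty ℰ]
    (p : Θ → ℰ → Measure X) (hp : ∀ θ E, IsProbabilityMeasure (p θ E))
    (θu : Θ) (Eu : ℰ)
    (hu : klDiv (∑ c, w c • q c) (p θu Eu) = ⨅ θ, ⨅ E, klDiv (∑ c, w c • q c) (p θ E))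
    (θc : Θ) (φc : C → ℰ)
    (hc : ∑ c, w c * klDiv (q c) (p θc (φc c))
        = ⨅ θ, ⨅ φ : C → ℰ, ∑ c, w c * klDiv (q c) (p θ (φ c)))
    (hgap : (⨅ θ, ∑ c, w c * ⨅ E, klDiv (q c) (p θ E))
        < ⨅ θ, ⨅ E, klDiv (∑ c, w c • q c) (p θ E)) :
    klDiv (∑ c, w c • q c) (∑ c, w c • p θc (φc c)) < klDiv (∑ c, w c • q c) (p θu Eu) := by
  calc klDiv (∑ c, w c • q c) (∑ c, w c • p θc (φc c))
      ≤ ∑ c, w c * klDiv (q c) (p θc (φc c)) :=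
        KLAux.klDiv_mixture_le w hw q (fun c => p θc (φc c)) hq (fun c => hp θc (φc c))
    _ = ⨅ θ, ⨅ φ : C → ℰ, ∑ c, w c * klDiv (q c) (p θ (φ c)) := hc
    _ ≤ ⨅ θ, ∑ c, w c * ⨅ E, klDiv (q c) (p θ E) :=
        iInf_mono fun θ => KLAux.iInf_sum_le w hw (fun c E => klDiv (q c) (p θ E))
    _ < ⨅ θ, ⨅ E, klDiv (∑ c, w c • q c) (p θ E) := hgap
    _ = klDiv (∑ c, w c • q c) (p θu Eu) := hu.symm
end
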